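/- For every k ∈ ℝ^d, ε ∈ ℝ^d and γ ∈ ℝ^{d(d−1)/2}: U_d(π)·E(ε,γ)(k)·U_d(π)^* = −E(ε,γ)(k), where π denotes the constant vector (π,π,…,π) ∈ ℝ^d and ^* denotes the conjugate transpose. -/

import Mathlib

/-!
`U_n(π)` is block diagonal with blocks `U_{n-1}(π)` and `-U_{n-1}(π)`, and all the `U_n(ξ)` are
commuting unitaries. Conjugating the block matrix `M_n` by `U_n(π)` therefore negates its diagonal
blocks `M_{n-1}` (by induction) and fixes the unitary factors `U_{n-1}(γ)` of its off-diagonal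
blocks, which then pick up a single sign from `-U_{n-1}(π)`.
-/

open Matrix

noncomputable def Umat : (n : ℕ) → (Fin n → ℝ) → Matrix (Fin (2 ^ n)) (Fin (2 ^ n)) ℂ
  | 0, _ => 1
  | n + 1, ξ =>
      (Matrix.reindex (finSumFinEquiv.trans (finCongr (by rw [pow_succ, mul_two])))
        (finSumFinEquiv.trans (finCongr (by rw [pow_succ, mul_two]))))
        (Matrix.fromBlocks (Umat n fun j => ξ j.castSucc) 0 0
          (Complex.exp (Complex.I * (ξ (Fin.last n) : ℂ)) • Umat n fun j => ξ j.castSucc))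

/-- The recursively defined hopping matrix `M_n((a_j), (γ_{j,k}))`; only the entries
`γ j k` with `j < k` are relevant. -/
noncomputable def Mmat : (n : ℕ) → (Fin n → ℂ) → (Fin n → Fin n → ℝ) →
    Matrix (Fin (2 ^ n)) (Fin (2 ^ n)) ℂ
  | 0, _, _ => 0
  | n + 1, a, γ =>
      (Matrix.reindex (finSumFinEquiv.trans (finCongr (by rw [pow_succ, mul_two])))
        (finSumFinEquiv.trans (finCongr (by rw [pow_succ, mul_two]))))
        (Matrix.fromBlocks
          (Mmat n (fun j => a j.castSucc) fun j k => γ j.castSucc k.castSucc)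
          (a (Fin.last n) • Umat n fun j => γ j.castSucc (Fin.last n))
          ((starRingEnd ℂ) (a (Fin.last n)) • (Umat n fun j => γ j.castSucc (Fin.last n))ᴴ)
          (Mmat n (fun j => a j.castSucc) fun j k => γ j.castSucc k.castSucc))

/-- The matrix `E(ε,γ)(k) := M_d((t_j (1+e^{i(π/L)ε_j - i k_j}) (1/2)^{[L=1]})_j, -γ)`. -/
noncomputable def Emat (d L : ℕ) (t : Fin d → ℝ) (ε : Fin d → ℝ) (γ : Fin d → Fin d → ℝ)
    (k : Fin d → ℝ) : Matrix (Fin (2 ^ d)) (Fin (2 ^ d)) ℂ :=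
  Mmat d
    (fun j => (t j : ℂ) *
      (1 + Complex.exp (Complex.I * Complex.ofReal (Real.pi / (L : ℝ) * ε j - k j))) *
      (if L = 1 then (1 / 2 : ℂ) else 1))
    (fun j l => -γ j l)

section BlockMatrix

variable {α l m : Type*} [Fintype l] [Fintype m] [Ring α] [StarRing α]

theorem fromBlocks_diag_neg_conj (P : Matrix l l α) (Q : Matrix m m α) (A : Matrix l l α)
    (B : Matrix l m α) (C : Matrix m l α) (D : Matrix m m α) :
    fromBlocks P 0 0 (-Q) * fromBlocks A B C D * (fromBlocks P 0 0 (-Q))ᴴ =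
      fromBlocks (P * A * Pᴴ) (-(P * B * Qᴴ)) (-(Q * C * Pᴴ)) (Q * D * Qᴴ) := by
  simp [fromBlocks_conjTranspose, fromBlocks_multiply]

theorem conjTranspose_reindexRingEquiv (e : l ≃ m) (A : Matrix l l α) :
    (reindexRingEquiv α e A)ᴴ = reindexRingEquiv α e Aᴴ :=
  rfl

end BlockMatrix

def finTwoPowSuccEquiv (n : ℕ) : Fin (2 ^ n) ⊕ Fin (2 ^ n) ≃ Fin (2 ^ (n + 1)) :=
  finSumFinEquiv.trans (finCongr (by rw [pow_succ, mul_two]))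

theorem Umat_succ (n : ℕ) (ξ : Fin (n + 1) → ℝ) :
    Umat (n + 1) ξ = reindexRingEquiv ℂ (finTwoPowSuccEquiv n)
      (fromBlocks (Umat n fun j => ξ j.castSucc) 0 0
        (Complex.exp (Complex.I * (ξ (Fin.last n) : ℂ)) • Umat n fun j => ξ j.castSucc)) :=
  rfl

theorem Mmat_succ (n : ℕ) (a : Fin (n + 1) → ℂ) (γ : Fin (n + 1) → Fin (n + 1) → ℝ) :
    Mmat (n + 1) a γ = reindexRingEquiv ℂ (finTwoPowSuccEquiv n)
      (fromBlocks
        (Mmat n (fun j => a j.castSucc) fun j k => γ j.castSucc k.castSucc)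
        (a (Fin.last n) • Umat n fun j => γ j.castSucc (Fin.last n))
        ((starRingEnd ℂ) (a (Fin.last n)) • (Umat n fun j => γ j.castSucc (Fin.last n))ᴴ)
        (Mmat n (fun j => a j.castSucc) fun j k => γ j.castSucc k.castSucc)) :=
  rfl

theorem Umat_mul_conjTranspose_self (n : ℕ) (ξ : Fin n → ℝ) : Umat n ξ * (Umat n ξ)ᴴ = 1 := by
  induction n with
  | zero => simp [Umat]
  | succ n ih =>
    have hc : star (Complex.exp (Complex.I * ξ (Fin.last n))) *
        Complex.exp (Complex.I * ξ (Fin.last n)) = 1 := by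
      rw [Complex.star_def, Complex.conj_mul', mul_comm, Complex.norm_exp_ofReal_mul_I,
        Complex.ofReal_one, one_pow]
    rw [Umat_succ, conjTranspose_reindexRingEquiv, ← map_mul, fromBlocks_conjTranspose,
      fromBlocks_multiply]
    simp only [conjTranspose_zero, conjTranspose_smul, mul_zero, zero_mul, add_zero, zero_add,
      Matrix.smul_mul, Matrix.mul_smul, smul_smul, ih, hc, one_smul, fromBlocks_one, map_one]

theorem Umat_commute (n : ℕ) (ξ ξ' : Fin n → ℝ) : Commute (Umat n ξ) (Umat n ξ') := by
  induction n with
  | zero => simp [Umat]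
  | succ n ih =>
    simp only [Commute, SemiconjBy, Umat_succ, ← map_mul, fromBlocks_multiply]
    simp [smul_smul, (ih _ _).eq, mul_comm]

theorem Umat_conj_Umat (n : ℕ) (ξ ξ' : Fin n → ℝ) :
    Umat n ξ * Umat n ξ' * (Umat n ξ)ᴴ = Umat n ξ' := by
  rw [(Umat_commute n ξ ξ').eq, Matrix.mul_assoc, Umat_mul_conjTranspose_self, Matrix.mul_one]

theorem Umat_succ_const_pi (n : ℕ) :
    Umat (n + 1) (fun _ => Real.pi) = reindexRingEquiv ℂ (finTwoPowSuccEquiv n)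
      (fromBlocks (Umat n fun _ => Real.pi) 0 0 (-Umat n fun _ => Real.pi)) := by
  rw [Umat_succ, mul_comm, Complex.exp_pi_mul_I, neg_one_smul]

theorem Umat_pi_conj_Mmat (n : ℕ) (a : Fin n → ℂ) (γ : Fin n → Fin n → ℝ) :
    Umat n (fun _ => Real.pi) * Mmat n a γ * (Umat n (fun _ => Real.pi))ᴴ = -Mmat n a γ := by
  induction n with
  | zero => simp [Mmat]
  | succ n ih =>
    have hV (ξ : Fin n → ℝ) :
        Umat n (fun _ => Real.pi) * (Umat n ξ)ᴴ * (Umat n fun _ => Real.pi)ᴴ = (Umat n ξ)ᴴ := by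
      simpa [Matrix.mul_assoc] using congrArg conjTranspose (Umat_conj_Umat n _ ξ)
    rw [Umat_succ_const_pi, Mmat_succ, conjTranspose_reindexRingEquiv, ← map_mul, ← map_mul,
      ← map_neg, fromBlocks_diag_neg_conj, fromBlocks_neg]
    simp [ih, Umat_conj_Umat, hV]

theorem Emat_conj_pi_general (d L : ℕ) (t : Fin d → ℝ)
    (k ε : Fin d → ℝ) (γ : Fin d → Fin d → ℝ) :
    Umat d (fun _ => Real.pi) * Emat d L t ε γ k * (Umat d (fun _ => Real.pi))ᴴ =
      -Emat d L t ε γ k :=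
  Umat_pi_conj_Mmat d _ _

/-- Lemma 2.3 (1): `U_d(π) E(ε,γ)(k) U_d(π)^* = -E(ε,γ)(k)`. -/
theorem Emat_conj_pi (d L : ℕ) (hd : 2 ≤ d) (hL : 1 ≤ L) (t : Fin d → ℝ)
    (ht : ∀ j, 0 < t j) (k ε : Fin d → ℝ) (γ : Fin d → Fin d → ℝ) :
    Umat d (fun _ => Real.pi) * Emat d L t ε γ k * (Umat d (fun _ => Real.pi))ᴴ =
      -Emat d L t ε γ k :=
  Emat_conj_pi_general d L t k ε γ
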